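/- For any real numbers a, b and any real constants β, c, the function f(z) = -βz + (az+b)²/(1-z²) + c is convex on (-1,1); in particular the tippe top effective potential V(z,D,λ) = mgR(1-αz) + (λ(α-(1-γ)z) + RD√(γ+α²-1)(α-z))²/(2I₃R²γ²(γ+α²-1)(1-z²)) + const is convex in z on (-1,1) for all real D, λ, provided m, g, R, I₃ > 0, 0 < α < 1, and 1-α² < γ < 1. -/

import Mathlib

/-!
On `(-1, 1)` the partial fraction decomposition
`(a z + b)² / (1 - z²) = (a + b)² / (2 (1 - z)) + (a - b)² / (2 (1 + z)) - a²`
exhibits the rational term as a nonnegative combination of reciprocals of positive affine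
functions, hence convex. The tippe top potential has this shape: its numerator is the square of
an affine function of `z`, and its denominator constant is nonnegative since `γ + α² - 1 > 0`.
-/

open Set

theorem convexOn_inv_affine (p q : ℝ) :
    ConvexOn ℝ {z | 0 < p + q * z} fun z => (p + q * z)⁻¹ := by
  convert (convexOn_zpow (-1 : ℤ)).comp_affineMap (AffineMap.const ℝ ℝ p + q • AffineMap.id ℝ ℝ)
    using 1 <;> ext <;> simp

theorem convexOn_sq_div_one_sub_sq (a b : ℝ) :
    ConvexOn ℝ (Ioo (-1) 1) fun z : ℝ => (a * z + b) ^ 2 / (1 - z ^ 2) := by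
  have hsub : ConvexOn ℝ (Ioo (-1) 1) fun z : ℝ => (1 + -1 * z)⁻¹ :=
    (convexOn_inv_affine 1 (-1)).subset (fun z hz => by simp [hz.2]) (convex_Ioo _ _)
  have hadd : ConvexOn ℝ (Ioo (-1) 1) fun z : ℝ => (1 + 1 * z)⁻¹ :=
    (convexOn_inv_affine 1 1).subset (fun z hz => by simp; linarith [hz.1]) (convex_Ioo _ _)
  refine (((hsub.smul (c := (a + b) ^ 2 / 2) (by positivity)).add
    (hadd.smul (c := (a - b) ^ 2 / 2) (by positivity))).add_const (-a ^ 2)).congr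
      fun z ⟨hz₁, hz₂⟩ => ?_
  have : 1 + z ≠ 0 := by linarith
  have : 1 - z ≠ 0 := by linarith
  have : 1 - z ^ 2 ≠ 0 := by nlinarith
  simp only [Pi.add_apply, smul_eq_mul, one_mul, neg_one_mul, ← sub_eq_add_neg]
  field_simp
  ring

theorem convexOn_linear_add_sq_div_one_sub_sq_add_const (a b β c : ℝ) :
    ConvexOn ℝ (Ioo (-1) 1) fun z : ℝ => -β * z + (a * z + b) ^ 2 / (1 - z ^ 2) + c :=
  (((LinearMap.mul ℝ ℝ (-β)).convexOn (convex_Ioo _ _)).add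
    (convexOn_sq_div_one_sub_sq a b)).add_const c

theorem convexOn_linear_add_sq_div_mul_one_sub_sq_add_const {κ : ℝ} (hκ : 0 ≤ κ) (a b β c : ℝ) :
    ConvexOn ℝ (Ioo (-1) 1) fun z : ℝ => -β * z + (a * z + b) ^ 2 / (κ * (1 - z ^ 2)) + c := by
  refine ((((LinearMap.mul ℝ ℝ (-β)).convexOn (convex_Ioo _ _)).add
    ((convexOn_sq_div_one_sub_sq a b).smul (inv_nonneg.2 hκ))).add_const c).congr fun z _ => ?_
  simp only [Pi.add_apply, smul_eq_mul, LinearMap.mul_apply', div_eq_mul_inv, mul_inv]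
  ring

theorem stmt_2_general (a b β c : ℝ)
    (m grav R I₃ α γ : ℝ) (hI₃ : 0 < I₃)
    (hγl : 1 - α^2 < γ)
    (D lam c' : ℝ) :
    ConvexOn ℝ (Set.Ioo (-1 : ℝ) 1) (fun z => -β*z + (a*z+b)^2 / (1 - z^2) + c) ∧
    ConvexOn ℝ (Set.Ioo (-1 : ℝ) 1) (fun z =>
      m*grav*R*(1 - α*z)
        + (lam*(α - (1-γ)*z) + R*D*Real.sqrt (γ + α^2 - 1)*(α - z))^2
            / (2*I₃*R^2*γ^2*(γ + α^2 - 1)*(1 - z^2))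
        + c') := by
  refine ⟨convexOn_linear_add_sq_div_one_sub_sq_add_const a b β c, ?_⟩
  set s := Real.sqrt (γ + α ^ 2 - 1)
  have hκ : 0 ≤ 2 * I₃ * R ^ 2 * γ ^ 2 * (γ + α ^ 2 - 1) := by
    have : 0 < γ + α ^ 2 - 1 := by linarith
    positivity
  refine (convexOn_linear_add_sq_div_mul_one_sub_sq_add_const hκ (-(lam * (1 - γ) + R * D * s))
    (α * (lam + R * D * s)) (m * grav * R * α) (m * grav * R + c')).congr fun z _ => ?_
  ring

theorem stmt_2 (a b β c : ℝ)
    (m grav R I₃ α γ : ℝ) (hm : 0 < m) (hg : 0 < grav) (hR : 0 < R) (hI₃ : 0 < I₃)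
    (hα : 0 < α) (hα1 : α < 1) (hγl : 1 - α^2 < γ) (hγu : γ < 1)
    (D lam c' : ℝ) :
    ConvexOn ℝ (Set.Ioo (-1 : ℝ) 1) (fun z => -β*z + (a*z+b)^2 / (1 - z^2) + c) ∧
    ConvexOn ℝ (Set.Ioo (-1 : ℝ) 1) (fun z =>
      m*grav*R*(1 - α*z)
        + (lam*(α - (1-γ)*z) + R*D*Real.sqrt (γ + α^2 - 1)*(α - z))^2
            / (2*I₃*R^2*γ^2*(γ + α^2 - 1)*(1 - z^2))
        + c') :=
  stmt_2_general a b β c m grav R I₃ α γ hI₃ hγl D lam c'
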